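/- arXiv:math/0312426 — 3 statements merged into one kernel-verified Lean document; each statement's English description precedes it below -/
import Mathlib

section
/- Assume that every element of Z(G) is the square of an element of Z(G) (i.e. 2Z(G) = Z(G), which holds when Z(G) is finite of odd order). Let x = (V,c,V̄,c̄) ∈ M with V generic, and suppose the K-orbit of x is fixed by τ, i.e. there exists (g₁,g₂) ∈ K with (g₁,g₂)·x = τ(x). Then the K-orbit of x contains a point of M^τ, i.e. a point of the form (W,c',W,c'); equivalently, the K-orbit of x lies in the image of the natural map I : M^τ/K^τ → M/K. -/
/-! Model of flat `G`-connections on `Σ_ℓ # RP²` and its orientable double cover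
(genus `2ℓ`), following the two-base-point description.  A point of `G^{4ℓ+2}`
is a tuple `(a₁,b₁,…,a_ℓ,b_ℓ,c, ā₁,b̄₁,…,ā_ℓ,b̄_ℓ,c̄)`. -/
structure Pt (G : Type*) (ℓ : ℕ) where
  a : Fin ℓ → G
  b : Fin ℓ → G
  c : G
  a' : Fin ℓ → G
  b' : Fin ℓ → G
  c' : G

variable {G : Type*} [Group G] {ℓ : ℕ}

open scoped commutatorElement in
/-- The ordered product of commutators `∏_{i=1}^{ℓ} [aᵢ,bᵢ]`. -/
def relProd (a b : Fin ℓ → G) : G := (List.ofFn fun i => ⁅a i, b i⁆).prod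

/-- Membership in `M`: `∏[aᵢ,bᵢ] = c·c̄` and `∏[āᵢ,b̄ᵢ] = c̄·c`. -/
def inM (x : Pt G ℓ) : Prop :=
  relProd x.a x.b = x.c * x.c' ∧ relProd x.a' x.b' = x.c' * x.c

/-- The action of `K = G × G` on tuples. -/
def act (g : G × G) (x : Pt G ℓ) : Pt G ℓ where
  a := fun i => g.1 * x.a i * g.1⁻¹
  b := fun i => g.1 * x.b i * g.1⁻¹
  c := g.1 * x.c * g.2⁻¹
  a' := fun i => g.2 * x.a' i * g.2⁻¹
  b' := fun i => g.2 * x.b' i * g.2⁻¹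
  c' := g.2 * x.c' * g.1⁻¹

/-- The involution `τ(V,c,V̄,c̄) = (V̄,c̄,V,c)`. -/
def tauPt (x : Pt G ℓ) : Pt G ℓ := ⟨x.a', x.b', x.c', x.a, x.b, x.c⟩

/-- Membership in `M^τ`: a point of `M` of the form `(V,c,V,c)`. -/
def inMtau (x : Pt G ℓ) : Prop := inM x ∧ x.a' = x.a ∧ x.b' = x.b ∧ x.c' = x.c

/-- `V = (a₁,b₁,…,a_ℓ,b_ℓ)` is generic if every `g` commuting with all `aᵢ, bᵢ`
is central. -/
def Generic (a b : Fin ℓ → G) : Prop :=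
  ∀ g : G, (∀ i, g * a i = a i * g) → (∀ i, g * b i = b i * g) →
    g ∈ Subgroup.center G

/-- Membership in `N_r = {(V,c,V,c·r) : ∏[aᵢ,bᵢ] = c²·r}`. -/
def inN (r : G) (x : Pt G ℓ) : Prop :=
  x.a' = x.a ∧ x.b' = x.b ∧ x.c' = x.c * r ∧ relProd x.a x.b = x.c ^ 2 * r

/-! If `(g₁, g₂)·x = τ x`, then `g₂g₁` centralizes `V`, hence is central by genericity.
Acting by `(1, g₁⁻¹)` moves `x` to a point `(V, d, V, d·r)` of `N_r` with `r = (g₂g₁)⁻¹`.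
Writing `g₂g₁ = s²` with `s` central, acting further by `(1, s)` gives
`(V, d·s⁻¹, V, d·s⁻¹) ∈ M^τ`. -/

open scoped commutatorElement in
lemma relProd_conj (g : G) (a b : Fin ℓ → G) :
    relProd (fun i => g * a i * g⁻¹) (fun i => g * b i * g⁻¹) = g * relProd a b * g⁻¹ := by
  have h : (List.ofFn fun i => ⁅g * a i * g⁻¹, g * b i * g⁻¹⁆) =
      (List.ofFn fun i => ⁅a i, b i⁆).map (MulAut.conj g) := by
    rw [List.map_ofFn]
    congr 1
    funext i
    simp only [Function.comp, MulAut.conj_apply, commutatorElement_def]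
    group
  rw [relProd, h, ← map_list_prod (MulAut.conj g : G ≃* G), MulAut.conj_apply, relProd]

lemma act_mul (k k' : G × G) (x : Pt G ℓ) : act (k * k') x = act k (act k' x) := by
  simp only [act, Prod.fst_mul, Prod.snd_mul, mul_inv_rev, mul_assoc]

lemma inM_act (k : G × G) {x : Pt G ℓ} (hx : inM x) : inM (act k x) := by
  obtain ⟨h, h'⟩ := hx
  refine ⟨?_, ?_⟩
  · simp only [act, relProd_conj, h]
    group
  · simp only [act, relProd_conj, h']
    group

lemma inM_of_inN {r : G} (hr : r ∈ Subgroup.center G) {y : Pt G ℓ} (hy : inN r y) :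
    inM y := by
  obtain ⟨ha, hb, hc, hrel⟩ := hy
  refine ⟨by rw [hrel, hc, pow_two, mul_assoc], ?_⟩
  rw [ha, hb, hrel, hc, pow_two, mul_assoc, mul_assoc, Subgroup.mem_center_iff.mp hr]

lemma mul_comm_of_conj_conj {g₁ g₂ u v : G} (hu : g₁ * u * g₁⁻¹ = v) (hv : g₂ * v * g₂⁻¹ = u) :
    g₂ * g₁ * u = u * (g₂ * g₁) := by
  rw [← hu] at hv
  calc g₂ * g₁ * u = g₂ * (g₁ * u * g₁⁻¹) * g₂⁻¹ * (g₂ * g₁) := by group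
    _ = u * (g₂ * g₁) := by rw [hv]

lemma mul_mem_center_of_act_eq_tauPt {x : Pt G ℓ} (hgen : Generic x.a x.b) {g₁ g₂ : G}
    (h : act (g₁, g₂) x = tauPt x) : g₂ * g₁ ∈ Subgroup.center G := by
  simp only [act, tauPt, Pt.mk.injEq, funext_iff] at h
  obtain ⟨ha, hb, -, ha', hb', -⟩ := h
  exact hgen _ (fun i => mul_comm_of_conj_conj (ha i) (ha' i))
    (fun i => mul_comm_of_conj_conj (hb i) (hb' i))

lemma inN_act_of_act_eq_tauPt {x : Pt G ℓ} (hx : inM x) {g₁ g₂ : G}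
    (h : act (g₁, g₂) x = tauPt x) : inN (g₂ * g₁)⁻¹ (act (1, g₁⁻¹) x) := by
  simp only [act, tauPt, Pt.mk.injEq, funext_iff] at h
  obtain ⟨ha, hb, hc, -⟩ := h
  refine ⟨funext fun i => ?_, funext fun i => ?_, ?_, ?_⟩
  · simp only [act, ← ha]
    group
  · simp only [act, ← hb]
    group
  · simp only [act, ← hc]
    group
  · simp only [act, one_mul, inv_one, mul_one, hx.1, ← hc, pow_two]
    group

lemma inMtau_act_of_inN {s : G} (hs : s ∈ Subgroup.center G) {y : Pt G ℓ}
    (hy : inN (s * s)⁻¹ y) : inMtau (act (1, s) y) := by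
  have hcomm := Subgroup.mem_center_iff.mp hs
  have hM := inM_act (1, s) (inM_of_inN (inv_mem (mul_mem hs hs)) hy)
  obtain ⟨ha, hb, hc, -⟩ := hy
  refine ⟨hM, funext fun i => ?_, funext fun i => ?_, ?_⟩
  · simp only [act, ha, ← hcomm]
    group
  · simp only [act, hb, ← hcomm]
    group
  · simp only [act, hc, ← hcomm]
    group

theorem statement2_general
    (hsq : ∀ z ∈ Subgroup.center G, ∃ s ∈ Subgroup.center G, s * s = z)
    (x : Pt G ℓ) (hx : inM x) (hgen : Generic x.a x.b)
    (hfix : ∃ k : G × G, act k x = tauPt x) :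
    ∃ k : G × G, inMtau (act k x) := by
  obtain ⟨⟨g₁, g₂⟩, h⟩ := hfix
  obtain ⟨s, hs, hss⟩ := hsq _ (mul_mem_center_of_act_eq_tauPt hgen h)
  have hN : inN (s * s)⁻¹ (act (1, g₁⁻¹) x) := hss ▸ inN_act_of_act_eq_tauPt hx h
  exact ⟨(1, s) * (1, g₁⁻¹), act_mul _ _ x ▸ inMtau_act_of_inN hs hN⟩

/-- if every central element is a square of a central element
(`2Z(G) = Z(G)`), then for generic `x ∈ M` whose `K`-orbit is fixed by `τ`,
the `K`-orbit of `x` contains a point of `M^τ`, i.e. the class of `x` lies in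
the image of the natural map `I : M^τ/K^τ → M/K`. -/
theorem statement2 (hℓ : 1 ≤ ℓ)
    (hsq : ∀ z ∈ Subgroup.center G, ∃ s ∈ Subgroup.center G, s * s = z)
    (x : Pt G ℓ) (hx : inM x) (hgen : Generic x.a x.b)
    (hfix : ∃ k : G × G, act k x = tauPt x) :
    ∃ k : G × G, inMtau (act k x) :=
  statement2_general hsq x hx hgen hfix
end

section
/- Let r₁, r₂ ∈ Z(G) and suppose r₂ = r₁·s² for some s ∈ Z(G) (i.e. r₁ and r₂ have the same class in Z(G)/2Z(G)). Then N_{r₁} and N_{r₂} have the same image in the orbit space M/K: for every x ∈ N_{r₂} there exists k ∈ K with k·x ∈ N_{r₁}, and for every y ∈ N_{r₁} there exists k' ∈ K with k'·y ∈ N_{r₂}. -/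
variable {G : Type*} [Group G] {ℓ : ℕ}

/-! Translating by a central element `z` in the second factor of `K` fixes `V` and `V̄` and sends
`(V, c, V, c·r)` to `(V, c·z⁻¹, V, c·z⁻¹·(r·z²))`, a point of `N_{r·z²}` because
`c²·r = (c·z⁻¹)²·(r·z²)`. Taking `z = s` and `z = s⁻¹` moves `N_{r₁}` into `N_{r₂}` and back. -/

theorem conj_eq_self_of_mem_center {z : G} (hz : z ∈ Subgroup.center G) (g : G) :
    z * g * z⁻¹ = g := by
  rw [← Subgroup.mem_center_iff.mp hz g, mul_inv_cancel_right]

theorem inN_act_one_of_mem_center {r z : G} (hz : z ∈ Subgroup.center G) {x : Pt G ℓ}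
    (hx : inN r x) : inN (r * z ^ 2) (act (1, z) x) := by
  obtain ⟨ha, hb, hc, hrel⟩ := hx
  have hzc : ∀ g, Commute g z := Subgroup.mem_center_iff.mp hz
  have hrz2 : Commute r (z ^ 2) := (hzc r).pow_right 2
  refine ⟨?_, ?_, ?_, ?_⟩
  · funext i; simp [act, ha, conj_eq_self_of_mem_center hz]
  · funext i; simp [act, hb, conj_eq_self_of_mem_center hz]
  · simp only [act, hc, inv_one, mul_one, one_mul]
    rw [hrz2.eq, ← mul_assoc, ← (hzc x.c).eq]
    group
  · simp only [act, inv_one, mul_one, one_mul]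
    rw [hrel, (hzc x.c).inv_right.mul_pow, hrz2.eq]
    group

theorem statement6_general (r₁ r₂ : G)
    (s : G) (hs : s ∈ Subgroup.center G) (hrs : r₂ = r₁ * s ^ 2) :
    (∀ x : Pt G ℓ, inN r₂ x → ∃ k : G × G, inN r₁ (act k x)) ∧
    (∀ y : Pt G ℓ, inN r₁ y → ∃ k' : G × G, inN r₂ (act k' y)) := by
  refine ⟨fun x hx => ⟨(1, s⁻¹), ?_⟩, fun y hy => ⟨(1, s), hrs ▸ inN_act_one_of_mem_center hs hy⟩⟩
  simpa [hrs, inv_pow] using inN_act_one_of_mem_center (inv_mem hs) hx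

/-- if `r₁, r₂ ∈ Z(G)` with `r₂ = r₁·s²` for some `s ∈ Z(G)`
(same class in `Z(G)/2Z(G)`), then `N_{r₁}` and `N_{r₂}` have the same image
in the orbit space `M/K`. -/
theorem statement6 (hℓ : 1 ≤ ℓ) (r₁ r₂ : G)
    (hr₁ : r₁ ∈ Subgroup.center G) (hr₂ : r₂ ∈ Subgroup.center G)
    (s : G) (hs : s ∈ Subgroup.center G) (hrs : r₂ = r₁ * s ^ 2) :
    (∀ x : Pt G ℓ, inN r₂ x → ∃ k : G × G, inN r₁ (act k x)) ∧
    (∀ y : Pt G ℓ, inN r₁ y → ∃ k' : G × G, inN r₂ (act k' y)) :=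
  statement6_general r₁ r₂ s hs hrs
end

section
/- For every r ∈ Z(G) and every point x = (V,d,c,V,d,c·r) ∈ M, one has (r,e)·x = τ(x). Consequently τ(x) lies in the K-orbit of x, so every K-orbit containing such a point is fixed by the involution induced by τ on the orbit space M/K. -/
/-! Model of flat `G`-connections on `Σ_ℓ # Klein bottle` and its orientable
double cover (genus `2ℓ+1`), in the two-base-point description.  A point of
`G^{4ℓ+4}` is a tuple `(a₁,b₁,…,a_ℓ,b_ℓ,d,c, ā₁,b̄₁,…,ā_ℓ,b̄_ℓ,d̄,c̄)`. -/
structure PtK (G : Type*) (ℓ : ℕ) where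
  a : Fin ℓ → G
  b : Fin ℓ → G
  d : G
  c : G
  a' : Fin ℓ → G
  b' : Fin ℓ → G
  d' : G
  c' : G

variable {G : Type*} [Group G] {ℓ : ℕ}

/-- Membership in `M`: `∏[aᵢ,bᵢ] = c·d̄·c⁻¹·d` and `∏[āᵢ,b̄ᵢ] = c̄·d·c̄⁻¹·d̄`. -/
def inMK (x : PtK G ℓ) : Prop :=
  relProd x.a x.b = x.c * x.d' * x.c⁻¹ * x.d ∧
  relProd x.a' x.b' = x.c' * x.d * x.c'⁻¹ * x.d'

/-- The action of `K = G × G` on tuples. -/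
def actK (g : G × G) (x : PtK G ℓ) : PtK G ℓ where
  a := fun i => g.1 * x.a i * g.1⁻¹
  b := fun i => g.1 * x.b i * g.1⁻¹
  d := g.1 * x.d * g.1⁻¹
  c := g.1 * x.c * g.2⁻¹
  a' := fun i => g.2 * x.a' i * g.2⁻¹
  b' := fun i => g.2 * x.b' i * g.2⁻¹
  d' := g.2 * x.d' * g.2⁻¹
  c' := g.2 * x.c' * g.1⁻¹

/-- The involution `τ(V,d,c,V̄,d̄,c̄) = (V̄,d̄,c̄,V,d,c)`. -/
def tauK (x : PtK G ℓ) : PtK G ℓ := ⟨x.a', x.b', x.d', x.c', x.a, x.b, x.d, x.c⟩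

/-- Membership in `M^τ`: a point of `M` of the form `(V,d,c,V,d,c)`. -/
def inMtauK (x : PtK G ℓ) : Prop :=
  inMK x ∧ x.a' = x.a ∧ x.b' = x.b ∧ x.d' = x.d ∧ x.c' = x.c

/-- `(V,d)` is generic if every `g` commuting with `d` and with all `aᵢ, bᵢ`
is central. -/
def GenericK (a b : Fin ℓ → G) (d : G) : Prop :=
  ∀ g : G, g * d = d * g → (∀ i, g * a i = a i * g) →
    (∀ i, g * b i = b i * g) → g ∈ Subgroup.center G

theorem actK_central_one_eq_tauK {r : G} (hr : r ∈ Subgroup.center G) (a b : Fin ℓ → G)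
    (d c : G) :
    actK (r, 1) (⟨a, b, d, c, a, b, d, c * r⟩ : PtK G ℓ)
      = tauK (⟨a, b, d, c, a, b, d, c * r⟩ : PtK G ℓ) := by
  have conj_eq : ∀ g : G, r * g * r⁻¹ = g := fun g => by
    rw [← Subgroup.mem_center_iff.mp hr g, mul_inv_cancel_right]
  simp only [actK, tauK, conj_eq, inv_one, mul_one, one_mul,
    Subgroup.mem_center_iff.mp hr c]

theorem statement11_general (r : G) (hr : r ∈ Subgroup.center G)
    (a b : Fin ℓ → G) (d c : G) :
    actK (r, (1 : G)) (⟨a, b, d, c, a, b, d, c * r⟩ : PtK G ℓ)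
      = tauK (⟨a, b, d, c, a, b, d, c * r⟩ : PtK G ℓ) ∧
    ∃ k : G × G, actK k (⟨a, b, d, c, a, b, d, c * r⟩ : PtK G ℓ)
      = tauK (⟨a, b, d, c, a, b, d, c * r⟩ : PtK G ℓ) :=
  ⟨actK_central_one_eq_tauK hr a b d c, (r, 1), actK_central_one_eq_tauK hr a b d c⟩

/-- for `r ∈ Z(G)` and `x = (V,d,c,V,d,c·r) ∈ M` one has
`(r,e)·x = τ(x)`; hence `τ(x)` lies in the `K`-orbit of `x`, so the `K`-orbit
of `x` is fixed by the involution induced by `τ` on `M/K`. -/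
theorem statement11 (hℓ : 1 ≤ ℓ) (r : G) (hr : r ∈ Subgroup.center G)
    (a b : Fin ℓ → G) (d c : G)
    (hx : inMK (⟨a, b, d, c, a, b, d, c * r⟩ : PtK G ℓ)) :
    actK (r, (1 : G)) (⟨a, b, d, c, a, b, d, c * r⟩ : PtK G ℓ)
      = tauK (⟨a, b, d, c, a, b, d, c * r⟩ : PtK G ℓ) ∧
    ∃ k : G × G, actK k (⟨a, b, d, c, a, b, d, c * r⟩ : PtK G ℓ)
      = tauK (⟨a, b, d, c, a, b, d, c * r⟩ : PtK G ℓ) :=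
  statement11_general r hr a b d c
end
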